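/- Layer-wise uniqueness of sparse hidden representations: suppose x_L* satisfies φ⁻¹(x) = W_L x_L* with ‖x_L*‖₀ < spark(W_L)/2, and for each i = L−1,…,1, x_i* satisfies (x_{i+1}*)^{S_{i+1}} = W_i^{S_{i+1}} x_i* with ‖x_i*‖₀ < subspark(W_i, s_{i+1})/2 where s_{i+1} = ‖x_{i+1}*‖₀ and S_{i+1} is the support of x_{i+1}*. Then each x_i* is the unique solution of its corresponding linear system among vectors with at most s_i nonzeros. -/
import Mathlib


open Matrix MeasureTheory ProbabilityTheory

noncomputable def supp {m : ℕ} (x : Fin m → ℝ) : Finset (Fin m) :=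
  (Set.toFinite {j | x j ≠ 0}).toFinset

noncomputable def norm0 {m : ℕ} (x : Fin m → ℝ) : ℕ := (supp x).card

def rowSub {n m : ℕ} (W : Matrix (Fin n) (Fin m) ℝ) (S : Finset (Fin n)) :
    Matrix {i // i ∈ S} (Fin m) ℝ := fun i j => W i.1 j

noncomputable def spark {ι : Type*} [Fintype ι] {m : ℕ} (W : Matrix ι (Fin m) ℝ) : ℕ :=
  sInf ({m + 1} ∪ {k | ∃ x : Fin m → ℝ, x ≠ 0 ∧ W.mulVec x = 0 ∧ norm0 x = k})

noncomputable def subspark {n m : ℕ} (W : Matrix (Fin n) (Fin m) ℝ) (s : ℕ) : ℕ :=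
  sInf {k | ∃ S : Finset (Fin n), S.card = s ∧ spark (rowSub W S) = k}

noncomputable def subrank {n m : ℕ} (W : Matrix (Fin n) (Fin m) ℝ) (s : ℕ) : ℕ :=
  sInf {k | ∃ S : Finset (Fin n), S.card = s ∧ (rowSub W S).rank = k}

def vrelu {k : ℕ} (v : Fin k → ℝ) : Fin k → ℝ := fun i => max (v i) 0

noncomputable def lambdaMin {s : ℕ} (M : Matrix (Fin s) (Fin s) ℝ) : ℝ :=
  sInf {r : ℝ | ∃ v : Fin s → ℝ, v ≠ 0 ∧ M.mulVec v = r • v}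

noncomputable def lambdaMax {s : ℕ} (M : Matrix (Fin s) (Fin s) ℝ) : ℝ :=
  sSup {r : ℝ | ∃ v : Fin s → ℝ, v ≠ 0 ∧ M.mulVec v = r • v}

lemma norm0_sub_le {m : ℕ} (v x : Fin m → ℝ) : norm0 (v - x) ≤ norm0 v + norm0 x := by
  have hsub : supp (v - x) ⊆ supp v ∪ supp x := by
    intro j hj
    simp only [supp, Set.Finite.mem_toFinset, Set.mem_setOf_eq, Finset.mem_union] at *
    by_contra h
    push_neg at h
    simp [Pi.sub_apply, h.1, h.2] at hj
  calc (supp (v - x)).card ≤ (supp v ∪ supp x).card := Finset.card_le_card hsub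
    _ ≤ norm0 v + norm0 x := Finset.card_union_le _ _

lemma spark_unique {ι : Type*} [Fintype ι] {m : ℕ} (W : Matrix ι (Fin m) ℝ)
    (v x : Fin m → ℝ) (heq : W.mulVec v = W.mulVec x)
    (hsp : norm0 v + norm0 x < spark W) : v = x := by
  by_contra hne
  have hz : v - x ≠ 0 := sub_ne_zero.mpr hne
  have hmul : W.mulVec (v - x) = 0 := by
    rw [Matrix.mulVec_sub, heq, sub_self]
  have hmem : norm0 (v - x) ∈
      ({m + 1} ∪ {k | ∃ z : Fin m → ℝ, z ≠ 0 ∧ W.mulVec z = 0 ∧ norm0 z = k}) :=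
    Or.inr ⟨v - x, hz, hmul, rfl⟩
  have hsinf : spark W ≤ norm0 (v - x) := Nat.sInf_le hmem
  have hle := norm0_sub_le v x
  omega

theorem layerwise_uniqueness {L n : ℕ} (hL : 1 ≤ L) (d : ℕ → ℕ)
    (W : (i : ℕ) → Matrix (Fin (d (i + 1))) (Fin (d i)) ℝ)
    (WL : Matrix (Fin n) (Fin (d L)) ℝ)
    (x : (i : ℕ) → Fin (d i) → ℝ) (y : Fin n → ℝ)
    (htopEq : WL.mulVec (x L) = y)
    (htopSp : 2 * norm0 (x L) < spark WL)
    (hmidEq : ∀ i, 1 ≤ i → i < L →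
      (rowSub (W i) (supp (x (i + 1)))).mulVec (x i) =
        fun j : {j // j ∈ supp (x (i + 1))} => x (i + 1) j.1)
    (hmidSp : ∀ i, 1 ≤ i → i < L →
      2 * norm0 (x i) < subspark (W i) (norm0 (x (i + 1)))) :
    (∀ v : Fin (d L) → ℝ, WL.mulVec v = y → norm0 v ≤ norm0 (x L) → v = x L) ∧
    (∀ i, 1 ≤ i → i < L → ∀ v : Fin (d i) → ℝ,
      (rowSub (W i) (supp (x (i + 1)))).mulVec v =
        (fun j : {j // j ∈ supp (x (i + 1))} => x (i + 1) j.1) →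
      norm0 v ≤ norm0 (x i) → v = x i) := by
  constructor
  · intro v hv hn
    apply spark_unique WL v (x L) (by rw [hv, htopEq]) (by omega)
  · intro i h1 h2 v hv hn
    have hsubspark : subspark (W i) (norm0 (x (i + 1))) ≤
        spark (rowSub (W i) (supp (x (i + 1)))) :=
      Nat.sInf_le ⟨supp (x (i + 1)), rfl, rfl⟩
    have hsp := hmidSp i h1 h2
    apply spark_unique (rowSub (W i) (supp (x (i + 1)))) v (x i)
      (by rw [hv, hmidEq i h1 h2]) (by omega)
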